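/- For a real number z with known bounds L ≤ z ≤ U where L ≤ 0 ≤ U, and a binary variable a ∈ {0,1}, the Big-M constraints ẑ ≥ 0, ẑ ≥ z, ẑ ≤ z - L·(1 - a), ẑ ≤ U·a have a solution (ẑ, a) if and only if ẑ = max(z, 0); moreover any (ẑ, a) satisfying these constraints satisfies ẑ = max(z,0). -/
import Mathlib

/-- Big-M mixed-integer encoding of ReLU: feasibility of (ẑ, a) is equivalent to ẑ = max(z,0). -/
theorem bigM_relu (z L U zhat : ℝ) (hLz : L ≤ z) (hzU : z ≤ U) (hL : L ≤ 0) (hU : 0 ≤ U) :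
    (∃ a : ℝ, (a = 0 ∨ a = 1) ∧ 0 ≤ zhat ∧ z ≤ zhat ∧
      zhat ≤ z - L * (1 - a) ∧ zhat ≤ U * a) ↔ zhat = max z 0 := by
  constructor
  · rintro ⟨a, (rfl | rfl), h0, hz, h1, h2⟩
    · simp only [mul_zero] at h2
      have : zhat = 0 := le_antisymm h2 h0
      subst this
      symm
      exact max_eq_right (le_trans hz le_rfl) |>.trans rfl
    · simp only [sub_self, mul_zero, sub_zero, mul_one] at h1
      have : zhat = z := le_antisymm h1 hz
      subst this
      exact (max_eq_left h0).symm
  · rintro rfl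
    rcases le_or_gt z 0 with h | h
    · exact ⟨0, Or.inl rfl, by simp [max_eq_right h], by simp [max_eq_right h, h],
        by simp [max_eq_right h]; linarith, by simp [max_eq_right h]⟩
    · exact ⟨1, Or.inr rfl, by simp [max_eq_left h.le, h.le],
        by simp [max_eq_left h.le], by simp [max_eq_left h.le], by simp [max_eq_left h.le, hzU]⟩
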